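/- With Φ_n(a) as defined by Φ_n(a) = Σ_{σ ∈ 𝔖_n} sgn(σ) 2^{ω(σ)} a^n ∫_{[−1/2,1/2]^n} ∏_j 𝟙_{[−1/(2a),1/(2a)]}(ξ_j − ξ_{σ^{−1}(j)}) dξ, one has Φ_3(a) = 0 for 0 < a ≤ 1/2 and Φ_3(a) = (2a − 1)^3 for a > 1/2. -/

import Mathlib

/-!
Grouping the permutations of `𝔖₃` by cycle type gives `Φ₃(a) = a³ (8 - 12 f₂(r) + 4 f₃(r))` with
`r = 1/(2a)`, where `f₂(r)` and `f₃(r)` are the volumes of the sets of pairs and triples of points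
of `[-1/2, 1/2]` that are pairwise `r`-close. For `r ≥ 1` every pair is close, so `f₂ = f₃ = 1`
and `Φ₃` vanishes. For `r ≤ 1`, once the first point `x` of a triple is fixed the other two range
over an interval `J_x` of length `ℓ(x) ≥ r`, and the close pairs of an interval of length `ℓ ≥ r`
have area `2rℓ - r²`. Hence `f₂(r) = 2r - r²`, and since `∫ ℓ = f₂(r)`,
`f₃(r) = 2r f₂(r) - r² = 3r² - 2r³`; then `8 - 12 f₂ + 4 f₃ = 8 (1 - r)³`.
-/

open MeasureTheory Real

/-- `Φ_n(a) = Σ_{σ ∈ 𝔖_n} sgn(σ) 2^{ω(σ)} a^n ∫_{[-1/2,1/2]^n}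
∏_j 𝟙_{[-1/(2a),1/(2a)]}(ξ_j - ξ_{σ⁻¹(j)}) dξ`, where `ω(σ)` is the number of
cycles of `σ` (fixed points counted as cycles). -/
noncomputable def Phi (n : ℕ) (a : ℝ) : ℝ :=
  ∑ σ : Equiv.Perm (Fin n),
    ((Equiv.Perm.sign σ : ℤ) : ℝ) *
      2 ^ (n - σ.support.card + σ.cycleType.card) * a ^ n *
      ∫ ξ in (Set.univ.pi fun _ : Fin n => Set.Icc (-(1:ℝ)/2) (1/2)),
        ∏ j : Fin n, (if |ξ j - ξ (σ⁻¹ j)| ≤ 1 / (2 * a) then (1:ℝ) else 0)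

open Set

theorem integral_pi_fin_three {α E : Type*} [MeasurableSpace α] [NormedAddCommGroup E]
    [NormedSpace ℝ E] {μ : Measure α} [SigmaFinite μ] {f : α → α → α → E}
    (hf : Integrable (fun p : α × α × α => f p.1 p.2.1 p.2.2) (μ.prod (μ.prod μ))) :
    ∫ ξ, f (ξ 0) (ξ 1) (ξ 2) ∂(Measure.pi fun _ : Fin 3 => μ) =
      ∫ x, ∫ y, ∫ z, f x y z ∂μ ∂μ ∂μ := by
  let e : (Fin 3 → α) ≃ᵐ α × α × α :=
    (MeasurableEquiv.piFinSuccAbove (fun _ => α) 0).trans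
      (MeasurableEquiv.prodCongr (MeasurableEquiv.refl α) MeasurableEquiv.finTwoArrow)
  have he : MeasurePreserving e (Measure.pi fun _ => μ) (μ.prod (μ.prod μ)) :=
    ((MeasurePreserving.id μ).prod (measurePreserving_finTwoArrow μ)).comp
      (measurePreserving_piFinSuccAbove (fun _ => μ) 0)
  calc ∫ ξ, f (ξ 0) (ξ 1) (ξ 2) ∂(Measure.pi fun _ => μ)
      = ∫ p, f p.1 p.2.1 p.2.2 ∂(μ.prod (μ.prod μ)) :=
        he.integral_comp' (fun p : α × α × α => f p.1 p.2.1 p.2.2)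
    _ = ∫ x, ∫ q, f x q.1 q.2 ∂(μ.prod μ) ∂μ := integral_prod _ hf
    _ = ∫ x, ∫ y, ∫ z, f x y z ∂μ ∂μ ∂μ := by
      refine integral_congr_ae ?_
      filter_upwards [hf.prod_right_ae] with x hx
      exact integral_prod _ hx

theorem setIntegral_univ_pi_fin_three {α E : Type*} [MeasureSpace α]
    [SigmaFinite (volume : Measure α)] [NormedAddCommGroup E] [NormedSpace ℝ E] {s : Set α}
    {f : α → α → α → E}
    (hf : Integrable (fun p : α × α × α => f p.1 p.2.1 p.2.2)
      ((volume.restrict s).prod ((volume.restrict s).prod (volume.restrict s)))) :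
    ∫ ξ in univ.pi fun _ : Fin 3 => s, f (ξ 0) (ξ 1) (ξ 2) =
      ∫ x in s, ∫ y in s, ∫ z in s, f x y z := by
  rw [volume_pi, Measure.restrict_pi_pi]
  exact integral_pi_fin_three hf

lemma min_add_sub_max_sub (α β r y : ℝ) :
    min β (y + r) - max α (y - r) = (β - α + 2 * r - |y - (β - r)| - |y - (α + r)|) / 2 := by
  rcases le_total 0 (y - (β - r)) with h | h <;> rcases le_total 0 (y - (α + r)) with h' | h' <;>
    simp only [abs_of_nonneg, abs_of_nonpos, h, h'] <;> simp only [min_def, max_def] <;>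
    split_ifs <;> linarith

lemma integral_abs_sub {α β c : ℝ} (hα : α ≤ c) (hβ : c ≤ β) :
    ∫ y in α..β, |y - c| = ((c - α) ^ 2 + (β - c) ^ 2) / 2 := by
  have hi : ∀ u v, IntervalIntegrable (fun y => |y - c|) volume u v :=
    fun u v => (continuous_abs.comp (continuous_sub_right c)).intervalIntegrable u v
  have left : EqOn (fun y => |y - c|) (fun y => c - y) (uIcc α c) := fun y hy => by
    rw [uIcc_of_le hα] at hy; simp [abs_of_nonpos (sub_nonpos.2 hy.2)]
  have right : EqOn (fun y => |y - c|) (fun y => y - c) (uIcc c β) := fun y hy => by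
    rw [uIcc_of_le hβ] at hy; exact abs_of_nonneg (sub_nonneg.2 hy.1)
  rw [← intervalIntegral.integral_add_adjacent_intervals (hi α c) (hi c β),
    intervalIntegral.integral_congr left, intervalIntegral.integral_congr right]
  simp only [intervalIntegral.integral_comp_sub_left fun y => y,
    intervalIntegral.integral_comp_sub_right fun y => y, integral_id]
  ring

lemma integral_min_add_sub_max_sub {α β r : ℝ} (hr : 0 ≤ r) (hrL : r ≤ β - α) :
    ∫ y in α..β, (min β (y + r) - max α (y - r)) = 2 * r * (β - α) - r ^ 2 := by
  have hi : ∀ c, IntervalIntegrable (fun y => |y - c|) volume α β :=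
    fun c => (continuous_abs.comp (continuous_sub_right c)).intervalIntegrable α β
  simp_rw [min_add_sub_max_sub]
  rw [intervalIntegral.integral_div,
    intervalIntegral.integral_sub (intervalIntegrable_const.sub (hi _)) (hi _),
    intervalIntegral.integral_sub intervalIntegrable_const (hi _),
    integral_abs_sub (by linarith) (by linarith), integral_abs_sub (by linarith) (by linarith),
    intervalIntegral.integral_const, smul_eq_mul]
  ring

lemma le_min_add_sub_max_sub {α β r x : ℝ} (hx : x ∈ Icc α β) (hr : 0 ≤ r) (hrL : r ≤ β - α) :
    r ≤ min β (x + r) - max α (x - r) := by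
  rcases max_cases α (x - r) with ⟨h, _⟩ | ⟨h, _⟩ <;>
    rcases min_cases β (x + r) with ⟨h', _⟩ | ⟨h', _⟩ <;> rw [h, h'] <;>
    linarith [hx.1, hx.2]

noncomputable def nearInd (r x y : ℝ) : ℝ := if |x - y| ≤ r then 1 else 0

section nearInd

variable {r : ℝ}

lemma nearInd_comm (r x y : ℝ) : nearInd r x y = nearInd r y x := by
  simp only [nearInd, abs_sub_comm]

lemma nearInd_self (hr : 0 ≤ r) (x : ℝ) : nearInd r x x = 1 := by
  simp [nearInd, hr]

lemma nearInd_mul_self (r x y : ℝ) : nearInd r x y * nearInd r x y = nearInd r x y := by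
  unfold nearInd; split_ifs <;> norm_num

lemma abs_nearInd_le_one (r x y : ℝ) : |nearInd r x y| ≤ 1 := by
  unfold nearInd; split_ifs <;> norm_num

lemma nearInd_of_mem_Icc {α β x y : ℝ} (hr : β - α ≤ r) (hx : x ∈ Icc α β) (hy : y ∈ Icc α β) :
    nearInd r x y = 1 :=
  if_pos (abs_sub_le_iff.2 ⟨by linarith [hx.2, hy.1], by linarith [hx.1, hy.2]⟩)

lemma Measurable.nearInd {β : Type*} [MeasurableSpace β] {f g : β → ℝ} (hf : Measurable f)
    (hg : Measurable g) (r : ℝ) : Measurable fun p => nearInd r (f p) (g p) :=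
  Measurable.ite (measurableSet_le (hf.sub hg).abs measurable_const) measurable_const
    measurable_const

lemma nearInd_mul_eq_indicator (x y : ℝ) (g : ℝ → ℝ) :
    nearInd r x y * g y = (Icc (x - r) (x + r)).indicator g y := by
  have : |x - y| ≤ r ↔ y ∈ Icc (x - r) (x + r) := by
    rw [abs_sub_comm, abs_sub_le_iff, mem_Icc]
    constructor <;> intro h <;> constructor <;> linarith [h.1, h.2]
  by_cases h : y ∈ Icc (x - r) (x + r)
  · simp [nearInd, h, this.2 h]
  · simp [nearInd, h, mt this.1 h]

lemma setIntegral_nearInd_mul (s : Set ℝ) (x : ℝ) (g : ℝ → ℝ) :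
    ∫ y in s, nearInd r x y * g y = ∫ y in s ∩ Icc (x - r) (x + r), g y := by
  simp_rw [nearInd_mul_eq_indicator]
  exact setIntegral_indicator measurableSet_Icc

lemma setIntegral_nearInd_Icc {α β x : ℝ} (hr : 0 ≤ r) (hx : x ∈ Icc α β) :
    ∫ y in Icc α β, nearInd r x y = min β (x + r) - max α (x - r) := by
  have := setIntegral_nearInd_mul (r := r) (Icc α β) x 1
  simp only [Pi.one_apply, mul_one] at this
  rw [this, Icc_inter_Icc, setIntegral_const, smul_eq_mul, mul_one, Real.volume_real_Icc,
    max_eq_left]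
  exact sub_nonneg.2 (max_le (le_min (hx.1.trans hx.2) (by linarith [hx.1]))
    (le_min (by linarith [hx.2]) (by linarith)))

lemma integral_integral_nearInd_Icc {α β : ℝ} (hr : 0 ≤ r) (hrL : r ≤ β - α) :
    ∫ y in Icc α β, ∫ z in Icc α β, nearInd r y z = 2 * r * (β - α) - r ^ 2 := by
  rw [setIntegral_congr_fun measurableSet_Icc fun y hy => setIntegral_nearInd_Icc hr hy,
    integral_Icc_eq_integral_Ioc, ← intervalIntegral.integral_of_le (by linarith),
    integral_min_add_sub_max_sub hr hrL]

end nearInd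

local notation "𝕀" => Icc (-(1:ℝ)/2) (1/2)

-- The paper's `f₂(r)` and `f₃(r)`.
noncomputable def nearPairVol (r : ℝ) : ℝ := ∫ x in 𝕀, ∫ y in 𝕀, nearInd r x y

noncomputable def nearTripleVol (r : ℝ) : ℝ :=
  ∫ x in 𝕀, ∫ y in 𝕀, ∫ z in 𝕀, nearInd r x y * nearInd r x z * nearInd r y z

section nearVol

variable {r : ℝ}

lemma nearPairVol_of_le_one (hr : 0 ≤ r) (h1 : r ≤ 1) : nearPairVol r = 2 * r - r ^ 2 := by
  rw [nearPairVol, integral_integral_nearInd_Icc hr (by linarith)]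
  ring

lemma nearPairVol_of_one_le (h1 : 1 ≤ r) : nearPairVol r = 1 :=
  calc nearPairVol r = ∫ _ in 𝕀, ∫ _ in 𝕀, (1 : ℝ) :=
        setIntegral_congr_fun measurableSet_Icc fun x hx =>
          setIntegral_congr_fun measurableSet_Icc fun y hy =>
            nearInd_of_mem_Icc (by linarith) hx hy
    _ = 1 := by norm_num

lemma nearTripleVol_of_one_le (h1 : 1 ≤ r) : nearTripleVol r = 1 := by
  have h : ∀ x ∈ 𝕀, ∀ y ∈ 𝕀, nearInd r x y = 1 := fun x hx y hy =>
    nearInd_of_mem_Icc (by linarith) hx hy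
  calc nearTripleVol r = ∫ _ in 𝕀, ∫ _ in 𝕀, ∫ _ in 𝕀, (1 : ℝ) :=
        setIntegral_congr_fun measurableSet_Icc fun x hx =>
          setIntegral_congr_fun measurableSet_Icc fun y hy =>
            setIntegral_congr_fun measurableSet_Icc fun z hz => by
              simp only [h x hx y hy, h x hx z hz, h y hy z hz, mul_one]
    _ = 1 := by norm_num

lemma nearTripleVol_of_le_one (hr : 0 ≤ r) (h1 : r ≤ 1) :
    nearTripleVol r = 3 * r ^ 2 - 2 * r ^ 3 := by
  have inner : ∀ x ∈ 𝕀, ∫ y in 𝕀, ∫ z in 𝕀, nearInd r x y * nearInd r x z * nearInd r y z =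
      2 * r * (min (1/2) (x + r) - max (-(1:ℝ)/2) (x - r)) - r ^ 2 := fun x hx => by
    simp_rw [mul_assoc, integral_const_mul, setIntegral_nearInd_mul, Icc_inter_Icc]
    rw [integral_integral_nearInd_Icc hr (le_min_add_sub_max_sub hx hr (by linarith))]
    ring
  have hc : Continuous fun x : ℝ => min (1/2) (x + r) - max (-(1:ℝ)/2) (x - r) := by fun_prop
  rw [nearTripleVol, setIntegral_congr_fun measurableSet_Icc inner, integral_Icc_eq_integral_Ioc,
    ← intervalIntegral.integral_of_le (by norm_num),
    intervalIntegral.integral_sub ((hc.intervalIntegrable _ _).const_mul _) intervalIntegrable_const,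
    intervalIntegral.integral_const_mul, integral_min_add_sub_max_sub hr (by linarith),
    intervalIntegral.integral_const, smul_eq_mul]
  ring

end nearVol

lemma sign_mul_two_pow_cycles_fin_three (σ : Equiv.Perm (Fin 3)) :
    ((Equiv.Perm.sign σ : ℤ) : ℝ) * 2 ^ (3 - σ.support.card + σ.cycleType.card) =
      if σ = 1 then 8 else if σ * σ = 1 then -4 else 2 := by
  have h : ∀ τ : Equiv.Perm (Fin 3),
      (Equiv.Perm.sign τ : ℤ) * 2 ^ (3 - τ.support.card + τ.cycleType.card) =
        if τ = 1 then 8 else if τ * τ = 1 then -4 else 2 := by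
    decide
  exact_mod_cast congrArg (Int.cast : ℤ → ℝ) (h σ)

lemma Phi_three {a : ℝ} (ha : 0 < a) :
    Phi 3 a = a ^ 3 * (8 - 12 * nearPairVol (1 / (2 * a)) + 4 * nearTripleVol (1 / (2 * a))) := by
  have hr : 0 ≤ 1 / (2 * a) := by positivity
  rw [Phi]
  simp only [← nearInd.eq_1]
  generalize 1 / (2 * a) = r at hr ⊢
  have cube : ∀ f : ℝ → ℝ → ℝ → ℝ, Measurable (fun p : ℝ × ℝ × ℝ => f p.1 p.2.1 p.2.2) →
      (∀ x y z, |f x y z| ≤ 1) → ∫ ξ in univ.pi fun _ : Fin 3 => 𝕀, f (ξ 0) (ξ 1) (ξ 2) =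
        ∫ x in 𝕀, ∫ y in 𝕀, ∫ z in 𝕀, f x y z := fun f hm hb =>
    setIntegral_univ_pi_fin_three
      (.of_bound hm.aestronglyMeasurable 1 (ae_of_all _ fun p => hb _ _ _))
  have hx : Measurable fun p : ℝ × ℝ × ℝ => p.1 := measurable_fst
  have hy : Measurable fun p : ℝ × ℝ × ℝ => p.2.1 := measurable_snd.fst
  have hz : Measurable fun p : ℝ × ℝ × ℝ => p.2.2 := measurable_snd.snd
  rw [show (Finset.univ : Finset (Equiv.Perm (Fin 3))) =
    {1, Equiv.swap 0 1, Equiv.swap 0 2, Equiv.swap 1 2, Equiv.swap 0 1 * Equiv.swap 0 2,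
      Equiv.swap 0 2 * Equiv.swap 0 1} by decide]
  repeat rw [Finset.sum_insert (by decide)]
  simp +decide only [Finset.sum_singleton, sign_mul_two_pow_cycles_fin_three,
    Fin.prod_univ_three, Equiv.swap_inv, mul_inv_rev, Equiv.Perm.mul_apply, Equiv.swap_apply_def,
    inv_one, Equiv.Perm.one_apply, nearInd_self hr, if_true, if_false, Fin.isValue, mul_one]
  -- A transposition contributes `nearInd ^ 2 = nearInd`, and both 3-cycles the same triangle.
  simp only [nearInd_comm, nearInd_mul_self, mul_comm, mul_left_comm, one_mul]
  have hn := abs_nearInd_le_one r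
  rw [cube (fun _ _ _ => 1) measurable_const fun _ _ _ => by norm_num,
    cube (fun x y _ => nearInd r x y) (hx.nearInd hy r) fun _ _ _ => hn _ _,
    cube (fun x _ z => nearInd r x z) (hx.nearInd hz r) fun _ _ _ => hn _ _,
    cube (fun _ y z => nearInd r y z) (hy.nearInd hz r) fun _ _ _ => hn _ _,
    cube (fun x y z => nearInd r x y * (nearInd r x z * nearInd r y z))
      ((hx.nearInd hy r).mul ((hx.nearInd hz r).mul (hy.nearInd hz r))) fun x y z => by
        rw [abs_mul, abs_mul]
        exact mul_le_one₀ (hn x y) (by positivity) (mul_le_one₀ (hn x z) (abs_nonneg _) (hn y z))]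
  have hI : (volume.restrict 𝕀).real univ = 1 := by norm_num
  simp only [nearPairVol, nearTripleVol, mul_assoc, integral_const, hI, one_smul]
  ring

/-- `Φ₃(a) = 0` for `0 < a ≤ 1/2` and `Φ₃(a) = (2a-1)³` for `a > 1/2`. -/
theorem stmt14 (a : ℝ) (ha : 0 < a) :
    (a ≤ 1/2 → Phi 3 a = 0) ∧
    (1/2 < a → Phi 3 a = (2 * a - 1) ^ 3) := by
  have hr : 0 ≤ 1 / (2 * a) := by positivity
  refine ⟨fun h => ?_, fun h => ?_⟩
  · have h1 : 1 ≤ 1 / (2 * a) := by rw [le_div_iff₀ (by positivity)]; linarith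
    rw [Phi_three ha, nearPairVol_of_one_le h1, nearTripleVol_of_one_le h1]
    ring
  · have h1 : 1 / (2 * a) ≤ 1 := by rw [div_le_one (by positivity)]; linarith
    rw [Phi_three ha, nearPairVol_of_le_one hr h1, nearTripleVol_of_le_one hr h1]
    field_simp
    ring
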